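/- arXiv:2010.07175 — 3 statements merged into one kernel-verified Lean document; each statement's English description precedes it below -/
import Mathlib

section
/- Let R be a finite commutative ring, σ a ring automorphism of R, δ a unit in R, and n a positive integer. The polynomial x^n - δ lies in the center of the skew polynomial ring R[x; σ] if and only if σ(δ) = δ and the order of σ divides n. -/
/-- Multiplication in the skew polynomial ring `S[x;σ]`, where polynomials are
represented as finitely supported coefficient functions `ℕ →₀ S` and
`(a x^i) (b x^j) = a σ^i(b) x^{i+j}`. -/
noncomputable def skewMul {S : Type} [Ring S] (σ : RingAut S) (f g : ℕ →₀ S) : ℕ →₀ S :=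
  f.sum fun i a => g.sum fun j b => Finsupp.single (i + j) (a * (σ ^ i) b)

/-! A central element commutes in particular with the monomials `x` and `b`; comparing the
coefficients of `x` and of `x^n` in `(x^n - δ) x = x (x^n - δ)` and `(x^n - δ) b = b (x^n - δ)`
gives `σ δ = δ` and `σ^n b = b`. Conversely these two conditions make `x^n - δ` commute with
every monomial, hence, by biadditivity of the product, with every skew polynomial. -/

section skewMul

variable {S : Type} [Ring S] (σ : RingAut S)

@[simp]
lemma skewMul_zero_left (g : ℕ →₀ S) : skewMul σ 0 g = 0 := by
  simp [skewMul]

@[simp]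
lemma skewMul_zero_right (f : ℕ →₀ S) : skewMul σ f 0 = 0 := by
  simp [skewMul]

lemma skewMul_add_left (f f' g : ℕ →₀ S) :
    skewMul σ (f + f') g = skewMul σ f g + skewMul σ f' g :=
  Finsupp.sum_add_index' (by simp) fun _ _ _ => by simp [add_mul, Finsupp.sum_add]

lemma skewMul_add_right (f g g' : ℕ →₀ S) :
    skewMul σ f (g + g') = skewMul σ f g + skewMul σ f g' := by
  simp only [skewMul, ← Finsupp.sum_add]
  refine Finsupp.sum_congr fun i _ => Finsupp.sum_add_index' (by simp) fun _ _ _ => ?_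
  simp [mul_add]

lemma skewMul_sub_left (f f' g : ℕ →₀ S) :
    skewMul σ (f - f') g = skewMul σ f g - skewMul σ f' g :=
  eq_sub_of_add_eq <| by rw [← skewMul_add_left, sub_add_cancel]

lemma skewMul_sub_right (f g g' : ℕ →₀ S) :
    skewMul σ f (g - g') = skewMul σ f g - skewMul σ f g' :=
  eq_sub_of_add_eq <| by rw [← skewMul_add_right, sub_add_cancel]

@[simp]
lemma skewMul_single_single (i j : ℕ) (a b : S) :
    skewMul σ (Finsupp.single i a) (Finsupp.single j b) =
      Finsupp.single (i + j) (a * (σ ^ i) b) := by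
  simp [skewMul]

lemma forall_skewMul_comm_iff_single (f : ℕ →₀ S) :
    (∀ g, skewMul σ f g = skewMul σ g f) ↔
      ∀ j b, skewMul σ f (Finsupp.single j b) = skewMul σ (Finsupp.single j b) f := by
  refine ⟨fun h j b => h _, fun h g => g.induction_linear (by simp) (fun g g' hg hg' => ?_) h⟩
  rw [skewMul_add_left, skewMul_add_right, hg, hg']

lemma skewMul_monomial_sub_const_single (n : ℕ) (δ : S) (j : ℕ) (b : S) :
    skewMul σ (Finsupp.single n 1 - Finsupp.single 0 δ) (Finsupp.single j b) =
      Finsupp.single (n + j) ((σ ^ n) b) - Finsupp.single j (δ * b) := by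
  simp [skewMul_sub_left]

lemma skewMul_single_monomial_sub_const (n : ℕ) (δ : S) (j : ℕ) (b : S) :
    skewMul σ (Finsupp.single j b) (Finsupp.single n 1 - Finsupp.single 0 δ) =
      Finsupp.single (n + j) b - Finsupp.single j (b * (σ ^ j) δ) := by
  simp [skewMul_sub_right, add_comm]

end skewMul

theorem stmt7_general (S : Type) [CommRing S] (σ : RingAut S)
    (δ : S) (n : ℕ) :
    (∀ g : ℕ →₀ S,
        skewMul σ (Finsupp.single n 1 - Finsupp.single 0 δ) g =
          skewMul σ g (Finsupp.single n 1 - Finsupp.single 0 δ)) ↔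
      σ δ = δ ∧ orderOf σ ∣ n := by
  simp only [forall_skewMul_comm_iff_single, skewMul_monomial_sub_const_single,
    skewMul_single_monomial_sub_const, orderOf_dvd_iff_pow_eq_one]
  constructor
  · intro h
    refine ⟨?_, RingEquiv.ext fun b => ?_⟩
    · have hδ := h 1 1
      rw [map_one, one_mul, mul_one, sub_right_inj] at hδ
      exact (Finsupp.single_injective 1 hδ).symm
    · have hb := h 0 b
      rw [pow_zero, RingAut.one_apply, mul_comm, sub_left_inj] at hb
      exact Finsupp.single_injective n hb
  · rintro ⟨hδ, hσn⟩ j b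
    rw [hσn, RingAut.one_apply, RingAut.coe_pow, Function.IsFixedPt.iterate hδ j, mul_comm]

theorem stmt7 (S : Type) [CommRing S] [Fintype S] (σ : RingAut S)
    (δ : S) (hδ : IsUnit δ) (n : ℕ) (hn : 0 < n) :
    (∀ g : ℕ →₀ S,
        skewMul σ (Finsupp.single n 1 - Finsupp.single 0 δ) g =
          skewMul σ g (Finsupp.single n 1 - Finsupp.single 0 δ)) ↔
      σ δ = δ ∧ orderOf σ ∣ n :=
  stmt7_general S σ δ n
end

section
/- Let C = η₀A₀ ⊕ η₁A₁ ⊕ η₂A₂ be a linear code of length n over R = F_{p^m}[v]/⟨v^3 - v⟩, where each A_i is an F_{p^m}-linear code. Then the Euclidean dual satisfies C^⊥ = η₀A₀^⊥ ⊕ η₁A₁^⊥ ⊕ η₂A₂^⊥. Moreover C ⊆ C^⊥ if and only if A_i ⊆ A_i^⊥ for all i = 0, 1, 2. -/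
open Polynomial

set_option synthInstance.maxHeartbeats 1000000
set_option maxHeartbeats 1000000

noncomputable section

/-- The ring `R = F[v]/⟨v^3 - v⟩`. -/
abbrev Rq (F : Type) [Field F] : Type :=
  Polynomial F ⧸ Ideal.span {(X : Polynomial F) ^ 3 - X}

/-- The image of `v` in `R`. -/
def vR (F : Type) [Field F] : Rq F := Ideal.Quotient.mk _ X

/-- The orthogonal idempotents `η₀ = 1 - v²`, `η₁ = ζ(v² + v)`, `η₂ = ζ(v² - v)`
with `ζ = 2⁻¹`. -/
def eta (F : Type) [Field F] : Fin 3 → Rq F :=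
  ![1 - vR F ^ 2,
    algebraMap F (Rq F) (2 : F)⁻¹ * (vR F ^ 2 + vR F),
    algebraMap F (Rq F) (2 : F)⁻¹ * (vR F ^ 2 - vR F)]

/-- The Euclidean dual of a code, with respect to the standard bilinear form. -/
def dualSet {ι S : Type} [Fintype ι] [CommRing S] (C : Set (ι → S)) : Set (ι → S) :=
  {a | ∀ b ∈ C, ∑ t, a t * b t = 0}

/-!
Since `2` is invertible, evaluation at `v = 0, 1, -1` is an `F`-algebra isomorphism
`R ≅ F × F × F` (Chinese remainder theorem for `v³ - v = v (v - 1) (v + 1)`), and it sends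
`η₀, η₁, η₂` to the standard idempotents. Under this isomorphism `C` becomes the code whose
`i`-th component ranges over `Aᵢ`, and the bilinear form over `R` is computed componentwise.
So both claims reduce to coordinatewise statements, obtained by testing against words
supported in a single component (these lie in `C` because each `Aᵢ` contains `0`).
-/

section DecomposedCode

variable {ι κ K S : Type}

def decomposedCode (e : (κ → K) → S) (B : κ → Set (ι → K)) : Set (ι → S) :=
  {c | ∃ y : κ → ι → K, (∀ k, y k ∈ B k) ∧ c = fun t => e (fun k => y k t)}

lemma sum_ringEquiv_mul_ringEquiv [Fintype ι] [CommRing K] [CommRing S] (e : (κ → K) ≃+* S)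
    (y w : κ → ι → K) :
    ∑ t, e (fun k => y k t) * e (fun k => w k t) = e (fun k => ∑ t, y k t * w k t) := by
  simp only [← map_mul, ← map_sum]
  congr 1
  ext k
  simp

lemma single_mem_decomposedCode [DecidableEq κ] [Zero K] (e : (κ → K) → S)
    {B : κ → Set (ι → K)} (hB : ∀ k, 0 ∈ B k) {k : κ} {b : ι → K} (hb : b ∈ B k) :
    (fun t => e (fun j => Pi.single (M := fun _ => ι → K) k b j t)) ∈ decomposedCode e B := by
  refine ⟨Pi.single k b, fun j => ?_, rfl⟩
  obtain rfl | hjk := eq_or_ne j k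
  · simpa using hb
  · simpa [hjk] using hB j

theorem dualSet_decomposedCode [Fintype ι] [CommRing K] [CommRing S] (e : (κ → K) ≃+* S)
    {B : κ → Set (ι → K)} (hB : ∀ k, 0 ∈ B k) :
    dualSet (decomposedCode e B) = decomposedCode e (fun k => dualSet (B k)) := by
  classical
  ext c
  constructor
  · intro hc
    refine ⟨fun k t => e.symm (c t) k, fun k b hb => ?_, by simp⟩
    have horth := hc _ (single_mem_decomposedCode e hB hb)
    conv_lhs at horth => enter [2, t, 1]; rw [← e.apply_symm_apply (c t)]
    rw [sum_ringEquiv_mul_ringEquiv, map_eq_zero_iff e e.injective] at horth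
    simpa using congrFun horth k
  · rintro ⟨y, hy, rfl⟩ _ ⟨w, hw, rfl⟩
    rw [sum_ringEquiv_mul_ringEquiv, map_eq_zero_iff e e.injective]
    exact funext fun k => hy k (w k) (hw k)

theorem decomposedCode_subset_decomposedCode_iff [Zero K] {e : (κ → K) → S}
    (he : Function.Injective e)
    {B B' : κ → Set (ι → K)} (hB : ∀ k, 0 ∈ B k) :
    decomposedCode e B ⊆ decomposedCode e B' ↔ ∀ k, B k ⊆ B' k := by
  classical
  constructor
  · intro h k b hb
    obtain ⟨y, hy, hey⟩ := h (single_mem_decomposedCode e hB hb)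
    convert hy k
    ext t
    simpa using congrFun (he (congrFun hey t)) k
  · rintro h _ ⟨y, hy, rfl⟩
    exact ⟨y, fun k => h k (hy k), rfl⟩

end DecomposedCode

section
variable (F : Type) [Field F]

def evalPi : Rq F →ₐ[F] (Fin 3 → F) :=
  AdjoinRoot.liftAlgHom (X ^ 3 - X) (Algebra.ofId F (Fin 3 → F)) ![0, 1, -1] (by
    ext i; fin_cases i <;> norm_num [eval₂_sub])

lemma evalPi_vR : evalPi F (vR F) = ![0, 1, -1] := AdjoinRoot.liftAlgHom_root ..

lemma finrank_Rq : Module.finrank F (Rq F) = 3 := by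
  rw [finrank_quotient_span_eq_natDegree]
  compute_degree!

variable {F}

lemma evalPi_eta (h2 : (2 : F) ≠ 0) (j : Fin 3) :
    evalPi F (_root_.eta F j) = Pi.single j 1 := by
  ext i
  have h := evalPi_vR F
  fin_cases j <;> fin_cases i <;>
    simp [_root_.eta, h, Matrix.vecHead, Matrix.vecTail, one_add_one_eq_two, h2]

lemma evalPi_sum_eta_mul (h2 : (2 : F) ≠ 0) (x : Fin 3 → F) :
    evalPi F (∑ j, _root_.eta F j * algebraMap F (Rq F) (x j)) = x := by
  ext i
  simp [evalPi_eta h2, Pi.single_apply]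

lemma evalPi_bijective (h2 : (2 : F) ≠ 0) : Function.Bijective (evalPi F) := by
  have hsurj : Function.Surjective (evalPi F) := fun x => ⟨_, evalPi_sum_eta_mul h2 x⟩
  have : FiniteDimensional F (Rq F) := Module.finite_of_finrank_eq_succ (finrank_Rq F)
  refine ⟨?_, hsurj⟩
  exact (LinearMap.injective_iff_surjective_of_finrank_eq_finrank (f := (evalPi F).toLinearMap)
    (by rw [finrank_Rq, Module.finrank_fin_fun])).mpr hsurj

def etaEquiv (h2 : (2 : F) ≠ 0) : (Fin 3 → F) ≃+* Rq F :=
  (AlgEquiv.ofBijective (evalPi F) (evalPi_bijective h2)).symm.toRingEquiv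

lemma etaEquiv_apply (h2 : (2 : F) ≠ 0) (x : Fin 3 → F) :
    etaEquiv h2 x = ∑ j, _root_.eta F j * algebraMap F (Rq F) (x j) :=
  (etaEquiv h2).symm.injective <| by
    rw [RingEquiv.symm_apply_apply]
    exact (evalPi_sum_eta_mul h2 x).symm
end

lemma two_ne_zero_of_odd_card {F : Type} [Field F] [Fintype F] (h : Odd (Fintype.card F)) :
    (2 : F) ≠ 0 :=
  Ring.two_ne_zero fun h2 => by
    simpa [Nat.odd_iff.mp h] using FiniteField.even_card_iff_char_two.mp h2

theorem stmt9_general (p m n : ℕ) (hodd : Odd p)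
    (F : Type) [Field F] [Fintype F] (hF : Fintype.card F = p ^ m)
    (A : Fin 3 → Submodule F (Fin n → F))
    (C : Submodule (Rq F) (Fin n → Rq F))
    (hC : ∀ c, c ∈ C ↔ ∃ y : Fin 3 → Fin n → F, (∀ i, y i ∈ A i) ∧
        c = fun t => ∑ j, eta F j * algebraMap F (Rq F) (y j t)) :
    (∀ c, c ∈ dualSet (C : Set (Fin n → Rq F)) ↔
        ∃ y : Fin 3 → Fin n → F, (∀ i, y i ∈ dualSet (A i : Set (Fin n → F))) ∧
          c = fun t => ∑ j, eta F j * algebraMap F (Rq F) (y j t)) ∧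
      ((C : Set (Fin n → Rq F)) ⊆ dualSet (C : Set (Fin n → Rq F)) ↔
        ∀ i, (A i : Set (Fin n → F)) ⊆ dualSet (A i : Set (Fin n → F))) := by
  have h2 : (2 : F) ≠ 0 := two_ne_zero_of_odd_card (hF ▸ hodd.pow)
  have hCe : (C : Set (Fin n → Rq F)) = decomposedCode (etaEquiv h2) (fun i => A i) := by
    ext c
    simp only [SetLike.mem_coe, hC, decomposedCode, Set.mem_ofPred_eq, etaEquiv_apply]
  have hA0 : ∀ i, (0 : Fin n → F) ∈ (A i : Set (Fin n → F)) := fun i => (A i).zero_mem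
  rw [hCe, dualSet_decomposedCode _ hA0,
    decomposedCode_subset_decomposedCode_iff (etaEquiv h2).injective hA0]
  refine ⟨fun c => ?_, Iff.rfl⟩
  simp only [decomposedCode, Set.mem_ofPred_eq, etaEquiv_apply]

theorem stmt9 (p m n : ℕ) (hp : p.Prime) (hodd : Odd p) (hm : 0 < m)
    (F : Type) [Field F] [Fintype F] (hF : Fintype.card F = p ^ m)
    (A : Fin 3 → Submodule F (Fin n → F))
    (C : Submodule (Rq F) (Fin n → Rq F))
    (hC : ∀ c, c ∈ C ↔ ∃ y : Fin 3 → Fin n → F, (∀ i, y i ∈ A i) ∧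
        c = fun t => ∑ j, eta F j * algebraMap F (Rq F) (y j t)) :
    (∀ c, c ∈ dualSet (C : Set (Fin n → Rq F)) ↔
        ∃ y : Fin 3 → Fin n → F, (∀ i, y i ∈ dualSet (A i : Set (Fin n → F))) ∧
          c = fun t => ∑ j, eta F j * algebraMap F (Rq F) (y j t)) ∧
      ((C : Set (Fin n → Rq F)) ⊆ dualSet (C : Set (Fin n → Rq F)) ↔
        ∀ i, (A i : Set (Fin n → F)) ⊆ dualSet (A i : Set (Fin n → F))) :=
  stmt9_general p m n hodd F hF A C hC
end
end

section
/- Let C be a skew (σ, δ)-constacyclic code of length n over a finite commutative ring S, where σ is an automorphism of S whose order divides n and δ is a unit of S fixed by σ. Then the Euclidean dual C^⊥ is a skew (σ, δ⁻¹)-constacyclic code over S. -/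
/-- A code `C` of length `n` over `S` is skew `(σ, δ)`-constacyclic if it is closed
under the shift `(c₀, …, c_{n-1}) ↦ (σ(δ c_{n-1}), σ(c₀), …, σ(c_{n-2}))`. -/
def IsSkewConstacyclic {S : Type} [CommRing S] {n : ℕ} [NeZero n]
    (σ : RingAut S) (δ : S) (C : Set (Fin n → S)) : Prop :=
  ∀ c ∈ C, (fun i : Fin n => σ ((if i = 0 then δ else 1) * c (i - 1))) ∈ C

/-- The polynomial (coefficient vector) associated to a codeword. -/
noncomputable def toPoly {S : Type} [Semiring S] {n : ℕ} (c : Fin n → S) : ℕ →₀ S :=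
  ∑ i : Fin n, Finsupp.single (i : ℕ) (c i)

/-- A polynomial is monic: it has a coefficient equal to `1` beyond which all
coefficients vanish. -/
def IsMonicPoly {S : Type} [Semiring S] (g : ℕ →₀ S) : Prop :=
  ∃ d, g d = 1 ∧ ∀ j, d < j → g j = 0

/-- The skew reciprocal polynomial `h*(x) = Σ_{j=0}^k Θ^j(h_{k-j}) x^j` of a
polynomial `h` of degree (at most) `k`. -/
noncomputable def skewRecip {S : Type} [Ring S] (Θ : RingAut S) (k : ℕ) (h : ℕ →₀ S) :
    ℕ →₀ S :=
  ∑ j ∈ Finset.range (k + 1), Finsupp.single j ((Θ ^ j) (h (k - j)))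

/-! The shift by a unit `δ` is injective, so on a finite `(σ, δ)`-constacyclic code it is
onto: every `b ∈ C` is the shift of some `c ∈ C`. Pairing the `(σ, δ⁻¹)`-shift of `a ∈ C^⊥`
with the `(σ, δ)`-shift of `c` gives `σ (a ⬝ᵥ c) = 0`. -/

def skewShift {S : Type} [CommRing S] {n : ℕ} [NeZero n] (σ : RingAut S) (δ : S)
    (c : Fin n → S) : Fin n → S :=
  fun i => σ ((if i = 0 then δ else 1) * c (i - 1))

namespace skewShift

variable {S : Type} [CommRing S] {n : ℕ} [NeZero n] (σ : RingAut S)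

theorem injective (δ : Sˣ) : Function.Injective (skewShift σ (δ : S) : (Fin n → S) → _) := by
  intro x y h
  funext i
  have hi := σ.injective (congrFun h (i + 1))
  simp only [add_sub_cancel_right] at hi
  split_ifs at hi
  · exact (Units.mul_right_inj δ).mp hi
  · simpa using hi

/-- The scalings `δ⁻¹` and `δ` cancel at position `0`, so the inner product is only rotated. -/
theorem dotProduct_inv_skewShift (δ : Sˣ) (a b : Fin n → S) :
    skewShift σ ((δ⁻¹ : Sˣ) : S) a ⬝ᵥ skewShift σ (δ : S) b = σ (a ⬝ᵥ b) := by
  have hrot : ∑ t : Fin n, a (t - 1) * b (t - 1) = a ⬝ᵥ b :=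
    Fintype.sum_equiv (Equiv.subRight 1) _ _ fun _ => rfl
  rw [← hrot, map_sum]
  refine Finset.sum_congr rfl fun t _ => ?_
  simp only [skewShift, ← map_mul]
  congr 1
  split_ifs
  · rw [mul_mul_mul_comm, δ.inv_mul, one_mul]
  · ring

end skewShift

theorem IsSkewConstacyclic.surjOn {S : Type} [CommRing S] {n : ℕ} [NeZero n] {σ : RingAut S}
    {δ : Sˣ} {C : Set (Fin n → S)} (hfin : C.Finite) (hC : IsSkewConstacyclic σ (δ : S) C) :
    Set.SurjOn (skewShift σ (δ : S)) C C :=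
  ((hfin.injOn_iff_bijOn_of_mapsTo hC).mp (skewShift.injective σ δ).injOn).surjOn

theorem stmt14_general (S : Type) [CommRing S] [Fintype S] (n : ℕ) [NeZero n]
    (σ : RingAut S) (δ : Sˣ)
    (C : Submodule S (Fin n → S))
    (hC : IsSkewConstacyclic σ (δ : S) (C : Set (Fin n → S))) :
    IsSkewConstacyclic σ ((δ⁻¹ : Sˣ) : S) (dualSet (C : Set (Fin n → S))) := by
  intro a ha b hb
  obtain ⟨c, hc, rfl⟩ := hC.surjOn (Set.toFinite _) hb
  calc skewShift σ ((δ⁻¹ : Sˣ) : S) a ⬝ᵥ skewShift σ (δ : S) c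
      = σ (a ⬝ᵥ c) := skewShift.dotProduct_inv_skewShift σ δ a c
    _ = 0 := by rw [show a ⬝ᵥ c = 0 from ha c hc, map_zero]

theorem stmt14 (S : Type) [CommRing S] [Fintype S] (n : ℕ) [NeZero n]
    (σ : RingAut S) (hord : orderOf σ ∣ n) (δ : Sˣ) (hfix : σ δ = δ)
    (C : Submodule S (Fin n → S))
    (hC : IsSkewConstacyclic σ (δ : S) (C : Set (Fin n → S))) :
    IsSkewConstacyclic σ ((δ⁻¹ : Sˣ) : S) (dualSet (C : Set (Fin n → S))) :=
  stmt14_general S n σ δ C hC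
end
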